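/- arXiv:2308.10957 — 3 statements merged into one kernel-verified Lean document; each statement's English description precedes it below -/
import Mathlib

section
/- Let f : ℙ^N → Y be a surjective morphism of projective varieties over ℂ. Then either f is constant, or every fiber of f is finite (zero-dimensional). -/
open MvPolynomial

section Stmt3Aux

variable {σ : Type*}

/-- Homogeneous component of a product with a homogeneous polynomial. -/
lemma stmt3_hc_mul {R : Type*} [CommRing R] (p q : MvPolynomial σ R) {e k : ℕ}
    (hq : q.IsHomogeneous e) (hek : e ≤ k) :
    homogeneousComponent k (p * q) = homogeneousComponent (k - e) p * q := by
  conv_lhs => rw [← sum_homogeneousComponent p, Finset.sum_mul]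
  rw [map_sum]
  have key : ∀ i ∈ Finset.range (p.totalDegree + 1),
      homogeneousComponent k (homogeneousComponent i p * q)
        = if k - e = i then homogeneousComponent (k - e) p * q else 0 := by
    intro i _
    rw [homogeneousComponent_of_mem ((mem_homogeneousSubmodule _ _).2
      ((homogeneousComponent_isHomogeneous i p).mul hq))]
    by_cases h : k - e = i
    · subst h
      rw [if_pos (by omega), if_pos rfl]
    · rw [if_neg (by omega), if_neg h]
  rw [Finset.sum_congr rfl key, Finset.sum_ite_eq]
  split
  · rfl
  · next h =>
    have h2 : p.totalDegree < k - e := by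
      simp only [Finset.mem_range, not_lt] at h; omega
    rw [homogeneousComponent_eq_zero _ _ h2, zero_mul]

lemma stmt3_degree_eq_sum [Fintype σ] (d : σ →₀ ℕ) : d.degree = ∑ i, d i := by
  rw [Finsupp.degree]
  exact Finset.sum_subset (Finset.subset_univ _) (fun i _ hi => by
    simpa using Finsupp.notMem_support_iff.1 hi)

lemma stmt3_totalDegree_sub_hc_lt {R : Type*} [CommRing R] (p : MvPolynomial σ R) (t : ℕ)
    (ht : 0 < t) (htop : p.totalDegree ≤ t) :
    (p - homogeneousComponent t p).totalDegree < t := by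
  rw [totalDegree]
  apply Finset.sup_lt_iff (by simpa using ht) |>.2
  intro d hd
  rw [mem_support_iff] at hd
  have hcoeff : coeff d (p - homogeneousComponent t p) = if d.degree = t then 0 else coeff d p := by
    rw [coeff_sub, coeff_homogeneousComponent]
    split <;> simp
  rw [hcoeff] at hd
  have hdt : d.degree ≠ t := by intro h; rw [if_pos h] at hd; exact hd rfl
  rw [if_neg hdt] at hd
  have hle : (d.sum fun _ e => e) ≤ p.totalDegree := le_totalDegree (mem_support_iff.2 hd)
  have hdeg : (d.sum fun _ e => e) = d.degree := by
    rfl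
  omega

end Stmt3Aux

set_option maxHeartbeats 1000000 in
set_option synthInstance.maxHeartbeats 200000 in
/-- A morphism from `ℙ^N` to a projective variety (given globally by base-point-free
homogeneous polynomials `F i` of a common degree `e`, its image being automatically a
closed subvariety of `ℙ^M` onto which the morphism is surjective) is either constant,
or all of its fibers are finite. Fibers over a point of `ℙ^M` with homogeneous
coordinates `c ≠ 0` are recorded via the cone `{x | ∀ i, F i (x) = c i}`, which is
finite iff the projective fiber is finite. -/
theorem stmt3 (N M e : ℕ) (he : 0 < e)
    (F : Fin (M + 1) → MvPolynomial (Fin (N + 1)) ℂ)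
    (hhom : ∀ i, (F i).IsHomogeneous e)
    (hbpf : ∀ x : Fin (N + 1) → ℂ, x ≠ 0 → ∃ i, eval x (F i) ≠ 0) :
    (∀ x y : Fin (N + 1) → ℂ, x ≠ 0 → y ≠ 0 →
        ∃ s : ℂ, s ≠ 0 ∧ ∀ i, eval y (F i) = s * eval x (F i)) ∨
      (∀ c : Fin (M + 1) → ℂ, c ≠ 0 →
        {x : Fin (N + 1) → ℂ | ∀ i, eval x (F i) = c i}.Finite) := by
  classical
  right
  intro c _hc
  set I : Ideal (MvPolynomial (Fin (N + 1)) ℂ) := Ideal.span (Set.range F) with hI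
  -- Step 1: the common zero locus of the `F i` is contained in `{0}`.
  have hzero : MvPolynomial.zeroLocus ℂ I ⊆ ({0} : Set (Fin (N + 1) → ℂ)) := by
    intro x hx
    by_contra hx0
    obtain ⟨i, hi⟩ := hbpf x (by simpa using hx0)
    exact hi ((MvPolynomial.mem_zeroLocus_iff.1 hx) (F i) (Ideal.subset_span ⟨i, rfl⟩))
  -- Step 2: each variable has a power in `I` (Nullstellensatz).
  have hradX : ∀ j : Fin (N + 1), (X j : MvPolynomial (Fin (N + 1)) ℂ) ∈ I.radical := by
    intro j
    rw [← MvPolynomial.vanishingIdeal_zeroLocus_eq_radical (K := ℂ)]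
    exact MvPolynomial.vanishingIdeal_anti_mono hzero
      (by rw [MvPolynomial.mem_vanishingIdeal_iff]
          rintro x rfl
          simp)
  have hpow : ∀ j : Fin (N + 1), ∃ m : ℕ, (X j : MvPolynomial (Fin (N + 1)) ℂ) ^ m ∈ I :=
    fun j => hradX j
  choose m hm using hpow
  set k : ℕ := e + Finset.univ.sup m with hk
  have hek : e ≤ k := Nat.le_add_right _ _
  have hXk : ∀ j : Fin (N + 1), (X j : MvPolynomial (Fin (N + 1)) ℂ) ^ k ∈ I := by
    intro j
    have hmk : m j ≤ k := le_trans (Finset.le_sup (Finset.mem_univ j)) (Nat.le_add_left _ _)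
    have : (X j : MvPolynomial (Fin (N + 1)) ℂ) ^ k
        = (X j) ^ (k - m j) * (X j) ^ (m j) := by
      rw [← pow_add]; congr 1; omega
    rw [this]
    exact Ideal.mul_mem_left _ _ (hm j)
  set J : Ideal (MvPolynomial (Fin (N + 1)) ℂ) :=
    Ideal.span (Set.range fun i => F i - C (c i)) with hJ
  -- Step 3: `X j ^ k` is congruent mod `J` to a polynomial of degree `≤ k - e`.
  have hrep : ∀ j : Fin (N + 1), ∃ r : MvPolynomial (Fin (N + 1)) ℂ,
      r.totalDegree ≤ k - e ∧ (X j) ^ k - r ∈ J := by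
    intro j
    obtain ⟨p, hp⟩ := Ideal.mem_span_range_iff_exists_fun.1 (hXk j)
    have hXhom : ((X j : MvPolynomial (Fin (N + 1)) ℂ) ^ k).IsHomogeneous k := by
      rw [X_pow_eq_monomial]
      exact isHomogeneous_monomial _ (by
        rw [stmt3_degree_eq_sum]
        simp [Finsupp.single_apply])
    have hcomp : (X j : MvPolynomial (Fin (N + 1)) ℂ) ^ k
        = ∑ i, homogeneousComponent (k - e) (p i) * F i := by
      have h1 : homogeneousComponent k (∑ i, p i * F i)
          = (X j : MvPolynomial (Fin (N + 1)) ℂ) ^ k := by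
        rw [hp, homogeneousComponent_of_mem ((mem_homogeneousSubmodule _ _).2 hXhom), if_pos rfl]
      rw [← h1, map_sum]
      exact Finset.sum_congr rfl fun i _ => stmt3_hc_mul (p i) (F i) (hhom i) hek
    refine ⟨∑ i, C (c i) * homogeneousComponent (k - e) (p i), ?_, ?_⟩
    · refine (totalDegree_finset_sum _ _).trans (Finset.sup_le fun i _ => ?_)
      refine (totalDegree_mul _ _).trans ?_
      simp only [totalDegree_C, zero_add]
      exact (homogeneousComponent_isHomogeneous (k - e) (p i)).totalDegree_le
    · rw [hcomp, ← Finset.sum_sub_distrib]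
      refine Ideal.sum_mem _ fun i _ => ?_
      have : homogeneousComponent (k - e) (p i) * F i - C (c i) * homogeneousComponent (k - e) (p i)
          = homogeneousComponent (k - e) (p i) * (F i - C (c i)) := by ring
      rw [this]
      exact Ideal.mul_mem_left _ _ (Ideal.subset_span ⟨i, rfl⟩)
  -- Step 4: every polynomial is congruent mod `J` to one of degree `≤ D`.
  set D : ℕ := (N + 1) * (k - 1) with hD
  have main : ∀ n : ℕ, ∀ p : MvPolynomial (Fin (N + 1)) ℂ, p.totalDegree ≤ n →
      p ∈ (restrictTotalDegree (Fin (N + 1)) ℂ D) ⊔ (J.restrictScalars ℂ) := by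
    intro n
    induction n using Nat.strong_induction_on with
    | _ n ih =>
      intro p hp
      by_cases hpD : p.totalDegree ≤ D
      · exact Submodule.mem_sup_left ((mem_restrictTotalDegree _ _ _).2 hpD)
      push_neg at hpD
      set t : ℕ := p.totalDegree with htdef
      have htpos : 0 < t := lt_of_le_of_lt (Nat.zero_le _) hpD
      have htn : t ≤ n := hp
      -- reduce the top homogeneous component
      have hmono : ∀ d : Fin (N + 1) →₀ ℕ, d.degree = t → ∀ a : ℂ,
          (monomial d a : MvPolynomial (Fin (N + 1)) ℂ)
            ∈ (restrictTotalDegree (Fin (N + 1)) ℂ D) ⊔ (J.restrictScalars ℂ) := by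
        intro d hd a
        -- pigeonhole: some variable appears with exponent ≥ k
        have hj : ∃ j, k ≤ d j := by
          by_contra hcon
          push_neg at hcon
          have : d.degree ≤ (N + 1) * (k - 1) := by
            calc d.degree = ∑ i ∈ d.support, d i := rfl
              _ ≤ ∑ i : Fin (N + 1), d i :=
                  Finset.sum_le_sum_of_subset (Finset.subset_univ _)
              _ ≤ ∑ _i : Fin (N + 1), (k - 1) :=
                  Finset.sum_le_sum fun i _ => by have := hcon i; omega
              _ = (N + 1) * (k - 1) := by simp [Finset.sum_const, mul_comm]
          omega
        obtain ⟨j, hjk⟩ := hj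
        obtain ⟨r, hrdeg, hrJ⟩ := hrep j
        set d' : Fin (N + 1) →₀ ℕ := d - Finsupp.single j k with hd'
        have hdd : d = Finsupp.single j k + d' := by
          ext i
          simp only [Finsupp.add_apply, Finsupp.tsub_apply, hd']
          by_cases hij : i = j
          · subst hij; simp; omega
          · simp [Finsupp.single_apply, Ne.symm hij, hij]
        have hmon : (monomial d a : MvPolynomial (Fin (N + 1)) ℂ)
            = (X j) ^ k * monomial d' a := by
          rw [X_pow_eq_monomial, monomial_mul, one_mul, ← hdd]
        have hdk : d.degree = k + d'.degree := by
          rw [stmt3_degree_eq_sum, stmt3_degree_eq_sum, hdd]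
          simp only [Finsupp.add_apply]
          rw [Finset.sum_add_distrib]
          congr 1
          simp [Finsupp.single_apply]
        have hkt : k ≤ t := by rw [← hd]; omega
        have hd'deg : d'.degree ≤ t - k := by omega
        have hsplit : (monomial d a : MvPolynomial (Fin (N + 1)) ℂ)
            = r * monomial d' a + ((X j) ^ k - r) * monomial d' a := by
          rw [hmon]; ring
        rw [hsplit]
        refine Submodule.add_mem _ ?_ (Submodule.mem_sup_right ?_)
        · -- degree of r * monomial d' a is ≤ t - e < t ≤ n, recurse
          have hdeg : (r * monomial d' a).totalDegree ≤ t - e := by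
            refine (totalDegree_mul _ _).trans ?_
            have h1 : (monomial d' a).totalDegree ≤ t - k := by
              refine (totalDegree_monomial_le _ _).trans ?_
              exact hd'deg
            omega
          exact ih (t - 1) (by omega) _ (by omega)
        · exact Ideal.mul_mem_right _ _ hrJ
      have hsplit : p = (p - homogeneousComponent t p) + homogeneousComponent t p := by ring
      rw [hsplit]
      refine Submodule.add_mem _ ?_ ?_
      · have := stmt3_totalDegree_sub_hc_lt p t htpos le_rfl
        exact ih (t - 1) (by omega) _ (by omega)
      · rw [homogeneousComponent_apply]
        refine Submodule.sum_mem _ fun d hd => ?_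
        simp only [Finset.mem_filter] at hd
        exact hmono d hd.2 _
  -- Step 5: the quotient by `J` is a finite `ℂ`-module.
  have hfin : Module.Finite ℂ (MvPolynomial (Fin (N + 1)) ℂ ⧸ J) := by
    have hsurj : Function.Surjective
        ((Ideal.Quotient.mkₐ ℂ J).toLinearMap.comp
          (restrictTotalDegree (Fin (N + 1)) ℂ D).subtype) := by
      intro a
      obtain ⟨p, rfl⟩ := Ideal.Quotient.mk_surjective a
      obtain ⟨w, hw, jj, hj, hwj⟩ := Submodule.mem_sup.1 (main p.totalDegree p le_rfl)
      refine ⟨⟨w, hw⟩, ?_⟩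
      simp only [LinearMap.comp_apply, Submodule.subtype_apply, AlgHom.toLinearMap_apply,
        Ideal.Quotient.mkₐ_eq_mk]
      rw [← hwj]
      rw [map_add]
      have : Ideal.Quotient.mk J jj = 0 := Ideal.Quotient.eq_zero_iff_mem.2 hj
      rw [this, add_zero]
    exact Module.Finite.of_surjective _ hsurj
  -- Step 6: each coordinate function satisfies a nonzero univariate polynomial mod `J`.
  have hqj : ∀ j : Fin (N + 1), ∃ q : Polynomial ℂ, q ≠ 0 ∧
      Polynomial.aeval (X j : MvPolynomial (Fin (N + 1)) ℂ) q ∈ J := by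
    intro j
    haveI := hfin
    haveI : Algebra.IsIntegral ℂ (MvPolynomial (Fin (N + 1)) ℂ ⧸ J) :=
      Algebra.IsIntegral.of_finite ℂ _
    have hint : IsIntegral ℂ (Ideal.Quotient.mk J (X j)) :=
      Algebra.IsIntegral.isIntegral _
    obtain ⟨q, hqmonic, hq0⟩ := hint
    refine ⟨q, hqmonic.ne_zero, ?_⟩
    have halg : Polynomial.aeval (Ideal.Quotient.mkₐ ℂ J (X j)) q
        = Ideal.Quotient.mkₐ ℂ J (Polynomial.aeval (X j : MvPolynomial (Fin (N + 1)) ℂ) q) :=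
      Polynomial.aeval_algHom_apply _ _ _
    simp only [Ideal.Quotient.mkₐ_eq_mk] at halg
    have hmk : Ideal.Quotient.mk J (Polynomial.aeval (X j : MvPolynomial (Fin (N + 1)) ℂ) q)
        = 0 := by rw [← halg, Polynomial.aeval_def]; exact hq0
    exact Ideal.Quotient.eq_zero_iff_mem.mp hmk
  choose q hq0 hqJ using hqj
  -- Step 7: conclude finiteness of the fiber.
  have hsub : {x : Fin (N + 1) → ℂ | ∀ i, eval x (F i) = c i}
      ⊆ Set.pi Set.univ (fun j => {z : ℂ | (q j).IsRoot z}) := by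
    intro x hx
    intro j _
    have hker : J ≤ RingHom.ker (eval x : MvPolynomial (Fin (N + 1)) ℂ →+* ℂ) := by
      rw [hJ, Ideal.span_le]
      rintro _ ⟨i, rfl⟩
      simp only [SetLike.mem_coe, RingHom.mem_ker, map_sub, eval_C]
      rw [hx i, sub_self]
    have hPev : eval x (Polynomial.aeval (X j : MvPolynomial (Fin (N + 1)) ℂ) (q j)) = 0 :=
      hker (hqJ j)
    have haeq : Polynomial.aeval (x j) (q j) = 0 := by
      have h2 := Polynomial.aeval_algHom_apply
        (MvPolynomial.aeval x : MvPolynomial (Fin (N + 1)) ℂ →ₐ[ℂ] ℂ) (X j) (q j)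
      simp only [MvPolynomial.aeval_X] at h2
      have h3 : (MvPolynomial.aeval x)
          (Polynomial.aeval (X j : MvPolynomial (Fin (N + 1)) ℂ) (q j))
          = eval x (Polynomial.aeval (X j : MvPolynomial (Fin (N + 1)) ℂ) (q j)) :=
        RingHom.congr_fun (MvPolynomial.coe_aeval_eq_eval x) _
      rw [h2, h3, hPev]
    show (q j).IsRoot (x j)
    rw [Polynomial.IsRoot.def, ← Polynomial.coe_aeval_eq_eval]
    exact haeq
  refine Set.Finite.subset (Set.Finite.pi fun j => ?_) hsub
  exact Polynomial.finite_setOf_isRoot (hq0 j)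
end

section
/- There is no binary cubic f ∈ S³W* (dim W = 2) with f ≠ 0 and a binary cubic g with disc(g) ≠ 0 such that disc(f + t g) = c·t⁴ for some constant c ≠ 0 and all t ∈ ℂ. Equivalently, every line in ℙ S³W* not contained in the discriminant hypersurface meets it in at least two distinct points. -/
/-- The discriminant of the binary cubic `a₀x₀³ + 3a₁x₀²x₁ + 3a₂x₀x₁² + a₃x₁³`
(up to a nonzero scalar). -/
noncomputable def disc3 (a : Fin 4 → ℂ) : ℂ :=
  (a 0) ^ 2 * (a 3) ^ 2 - 6 * a 0 * a 1 * a 2 * a 3 + 4 * a 0 * (a 2) ^ 3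
    + 4 * (a 1) ^ 3 * a 3 - 3 * (a 1) ^ 2 * (a 2) ^ 2

/-! ### Auxiliary machinery: the `GL₂` action on binary cubics -/

/-- Coefficients of the cubic obtained from `a` by the substitution
`(x, y) ↦ (αx + βy, γx + δy)`. -/
noncomputable def act3 (α β γ δ : ℂ) (a : Fin 4 → ℂ) : Fin 4 → ℂ :=
![ a 0*α^3 + 3*a 1*α^2*γ + 3*a 2*α*γ^2 + a 3*γ^3,
   a 0*α^2*β + a 1*(α^2*δ + 2*α*β*γ) + a 2*(2*α*γ*δ + β*γ^2) + a 3*γ^2*δ,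
   a 0*α*β^2 + a 1*(β^2*γ + 2*α*β*δ) + a 2*(α*δ^2 + 2*β*γ*δ) + a 3*γ*δ^2,
   a 0*β^3 + 3*a 1*β^2*δ + 3*a 2*β*δ^2 + a 3*δ^3 ]

/-- Coefficients of `(px+qy)³`. -/
noncomputable def cube3 (p q : ℂ) : Fin 4 → ℂ := ![p^3, p^2*q, p*q^2, q^3]

/-- Coefficients of `(px+qy)²(ux+vy)`. -/
noncomputable def sqlin3 (p q u v : ℂ) : Fin 4 → ℂ :=
  ![p^2*u, (p^2*v + 2*p*q*u)/3, (q^2*u + 2*p*q*v)/3, q^2*v]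

lemma disc3_act3 (α β γ δ : ℂ) (a : Fin 4 → ℂ) :
    disc3 (act3 α β γ δ a) = (α*δ - β*γ)^6 * disc3 a := by
  simp only [disc3, act3, Matrix.cons_val_zero, Matrix.cons_val_one, Matrix.head_cons,
    Matrix.cons_val_two, Matrix.tail_cons, Matrix.cons_val_three]
  ring

lemma act3_add_smul (α β γ δ t : ℂ) (f g : Fin 4 → ℂ) :
    act3 α β γ δ (f + t • g) = act3 α β γ δ f + t • act3 α β γ δ g := by
  funext i
  fin_cases i <;> simp [act3] <;> ring

lemma act3_cube3 (α β γ δ p q : ℂ) :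
    act3 α β γ δ (cube3 p q) = cube3 (p*α + q*γ) (p*β + q*δ) := by
  funext i
  fin_cases i <;> simp [act3, cube3] <;> ring

lemma act3_sqlin3 (α β γ δ p q u v : ℂ) :
    act3 α β γ δ (sqlin3 p q u v) = sqlin3 (p*α + q*γ) (p*β + q*δ) (u*α + v*γ) (u*β + v*δ) := by
  funext i
  fin_cases i <;> simp [act3, sqlin3] <;> ring

/-! ### Existence of roots over `ℂ` -/

lemma exists_cbrt (w : ℂ) : ∃ z : ℂ, z ^ 3 = w :=
  IsAlgClosed.exists_pow_nat_eq w (n := 3) (by norm_num)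

lemma exists_sqrt (w : ℂ) : ∃ z : ℂ, z ^ 2 = w :=
  IsAlgClosed.exists_pow_nat_eq w (n := 2) (by norm_num)

open Polynomial in
lemma exists_cubic_root (a b c d : ℂ) (ha : a ≠ 0) : ∃ z : ℂ, a*z^3 + b*z^2 + c*z + d = 0 := by
  obtain ⟨z, hz⟩ := IsAlgClosed.exists_root (k := ℂ) (p := C a * X^3 + C b * X^2 + C c * X + C d)
    (by rw [Polynomial.degree_cubic ha]; exact (by norm_num))
  exact ⟨z, by simpa [Polynomial.IsRoot] using hz⟩

/-- A nonzero cubic with double root `[-d : 1]` (coefficients written in terms of the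
roots `d, d, e`) is a perfect cube or a square times an independent linear form. -/
lemma double_root_case (f : Fin 4 → ℂ) (d e : ℂ) (h0 : f 0 ≠ 0)
    (e1 : f 1 = -(f 0 * (2*d + e))/3)
    (e2 : f 2 = f 0 * (d^2 + 2*d*e)/3)
    (e3 : f 3 = -(f 0 * (d^2*e))) :
    (∃ p q : ℂ, (p ≠ 0 ∨ q ≠ 0) ∧ f = cube3 p q) ∨
    (∃ p q u v : ℂ, p*v - q*u ≠ 0 ∧ f = sqlin3 p q u v) := by
  by_cases hde : d = e
  · subst hde
    obtain ⟨p, hp⟩ := exists_cbrt (f 0)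
    have hpne : p ≠ 0 := by
      intro h; rw [h] at hp; simp at hp; exact h0 hp.symm
    refine Or.inl ⟨p, -d*p, Or.inl hpne, ?_⟩
    funext i; fin_cases i <;> simp [cube3]
    · exact hp.symm
    · rw [e1]; linear_combination d * hp
    · rw [e2]; linear_combination -d^2 * hp
    · rw [e3]; linear_combination d^3 * hp
  · refine Or.inr ⟨1, -d, f 0, -(f 0 * e), ?_, ?_⟩
    · intro h
      apply hde
      have hz : f 0 * (d - e) = 0 := by linear_combination h
      rcases mul_eq_zero.mp hz with h' | h'
      · exact absurd h' h0
      · exact sub_eq_zero.mp h'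
    · funext i; fin_cases i <;> simp [sqlin3]
      · rw [e1]; ring
      · rw [e2]; ring
      · rw [e3]; ring

/-- Every nonzero binary cubic with vanishing discriminant is a perfect cube of a
linear form or a square of a linear form times an independent linear form. -/
lemma factor3 (f : Fin 4 → ℂ) (hf : f ≠ 0) (hd : disc3 f = 0) :
    (∃ p q : ℂ, (p ≠ 0 ∨ q ≠ 0) ∧ f = cube3 p q) ∨
    (∃ p q u v : ℂ, p*v - q*u ≠ 0 ∧ f = sqlin3 p q u v) := by
  by_cases h0 : f 0 = 0
  · by_cases h1 : f 1 = 0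
    · by_cases h2 : f 2 = 0
      · have h3 : f 3 ≠ 0 := by
          intro h3
          exact hf (by funext i; fin_cases i <;> simp [h0, h1, h2, h3])
        obtain ⟨z, hz⟩ := exists_cbrt (f 3)
        refine Or.inl ⟨0, z, Or.inr ?_, ?_⟩
        · rintro rfl; simp at hz; exact h3 hz.symm
        · funext i; fin_cases i <;> simp [cube3, h0, h1, h2, hz.symm]
      · refine Or.inr ⟨0, 1, 3 * f 2, f 3, by simpa using h2, ?_⟩
        funext i; fin_cases i <;> simp [sqlin3, h0, h1] <;> ring
    · -- f 0 = 0, f 1 ≠ 0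
      have key : 4 * f 1 * f 3 = 3 * (f 2) ^ 2 := by
        have hz : (f 1)^2 * (4 * f 1 * f 3 - 3 * (f 2)^2) = 0 := by
          simp only [disc3] at hd
          linear_combination hd - (f 0 * f 3^2 - 6 * f 1 * f 2 * f 3 + 4 * f 2^3) * h0
        rcases mul_eq_zero.mp hz with h | h
        · exact absurd (pow_eq_zero_iff two_ne_zero |>.mp h) h1
        · linear_combination h
      refine Or.inr ⟨1, f 2 / (2 * f 1), 0, 3 * f 1, by simpa using h1, ?_⟩
      funext i; fin_cases i <;> simp [sqlin3, h0]
      · field_simp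
      · field_simp
        linear_combination key
  · -- f 0 ≠ 0 : find the three roots
    obtain ⟨z1, hz1⟩ := exists_cubic_root (f 0) (3 * f 1) (3 * f 2) (f 3) h0
    obtain ⟨w, hw⟩ := exists_sqrt ((3*f 1 + f 0*z1)^2 - 4*(f 0)*(3*f 2 + 3*f 1*z1 + f 0*z1^2))
    obtain ⟨z2, hz2⟩ : ∃ z2 : ℂ, z2 = (-(3*f 1 + f 0*z1) + w)/(2*f 0) := ⟨_, rfl⟩
    obtain ⟨z3, hz3⟩ : ∃ z3 : ℂ, z3 = (-(3*f 1 + f 0*z1) - w)/(2*f 0) := ⟨_, rfl⟩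
    have m1 : f 0 * (z2 + z3) = -(3*f 1 + f 0*z1) := by
      rw [hz2, hz3]; field_simp; ring
    have m2 : f 0 * (z2 * z3) = 3*f 2 + 3*f 1*z1 + f 0*z1^2 := by
      have m2' : (f 0)^2 * (z2 * z3) = f 0 * (3*f 2 + 3*f 1*z1 + f 0*z1^2) := by
        rw [hz2, hz3]; field_simp; linear_combination -hw
      exact mul_left_cancel₀ h0 (by linear_combination m2')
    have e1 : f 1 = -(f 0 * (z1 + z2 + z3))/3 := by
      linear_combination (1/3 : ℂ) * m1
    have e2 : f 2 = f 0 * (z1*z2 + z1*z3 + z2*z3)/3 := by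
      linear_combination (-1/3 : ℂ) * z1 * m1 - (1/3 : ℂ) * m2
    have e3 : f 3 = -(f 0 * (z1*z2*z3)) := by
      linear_combination z1 * m2 + hz1
    have key : (f 0)^4 * ((z1-z2)*(z1-z3)*(z2-z3))^2 = 0 := by
      have hdisc : disc3 f = -(f 0)^4 * ((z1-z2)*(z1-z3)*(z2-z3))^2/27 := by
        simp only [disc3]; rw [e1, e2, e3]; ring
      rw [hdisc] at hd
      linear_combination -27 * hd
    have hΔ : (z1-z2)*(z1-z3)*(z2-z3) = 0 := by
      rcases mul_eq_zero.mp key with h | h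
      · exact absurd (pow_eq_zero_iff (by norm_num) |>.mp h) h0
      · exact pow_eq_zero_iff two_ne_zero |>.mp h
    rcases mul_eq_zero.mp hΔ with h | h23
    · rcases mul_eq_zero.mp h with h12 | h13
      · have h12' : z1 = z2 := sub_eq_zero.mp h12
        exact double_root_case f z1 z3 h0 (by rw [e1, ← h12']; ring)
          (by rw [e2, ← h12']; ring) (by rw [e3, ← h12']; ring)
      · have h13' : z1 = z3 := sub_eq_zero.mp h13
        exact double_root_case f z1 z2 h0 (by rw [e1, ← h13']; ring)
          (by rw [e2, ← h13']; ring) (by rw [e3, ← h13']; ring)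
    · have h23' : z2 = z3 := sub_eq_zero.mp h23
      exact double_root_case f z2 z1 h0 (by rw [e1, ← h23']; ring)
        (by rw [e2, ← h23']; ring) (by rw [e3, ← h23']; ring)

/-! ### The two normal-form computations -/

/-- Normal form `x³` : if `disc3 (x³ + t·g) = c t⁴` for all `t` then `disc3 g = 0`. -/
lemma NF1 (b : Fin 4 → ℂ) (c : ℂ)
    (h : ∀ t : ℂ, disc3 (![1,0,0,0] + t • b) = c * t ^ 4) : disc3 b = 0 := by
  have E : ∀ t : ℂ, (1 + t * b 0) ^ 2 * (t * b 3) ^ 2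
      - 6 * (1 + t * b 0) * (t * b 1) * (t * b 2) * (t * b 3)
      + 4 * (1 + t * b 0) * (t * b 2) ^ 3 + 4 * (t * b 1) ^ 3 * (t * b 3)
      - 3 * (t * b 1) ^ 2 * (t * b 2) ^ 2 = c * t ^ 4 := by
    intro t
    have := h t
    simpa [disc3] using this
  have h3 : b 3 = 0 := by
    have h3sq : (b 3) ^ 2 = 0 := by
      linear_combination (2/3 : ℂ) * E 1 + (2/3 : ℂ) * E (-1) - (1/24 : ℂ) * E 2 - (1/24 : ℂ) * E (-2)
    exact pow_eq_zero_iff (two_ne_zero) |>.mp h3sq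
  have h2 : b 2 = 0 := by
    have h2cb : (b 2) ^ 3 = 0 := by
      linear_combination (1/8 : ℂ) * E 1 - (1/8 : ℂ) * E (-1)
        + (- (1/2) * b 0 * b 3 + (3/2) * b 1 * b 2) * h3
    exact pow_eq_zero_iff (three_ne_zero) |>.mp h2cb
  simp only [disc3]
  linear_combination (b 0 ^2 * b 3 - 6 * b 0 * b 1 * b 2 + 4 * b 1 ^3) * h3
    + (4 * b 0 * b 2 ^ 2 - 3 * b 1 ^2 * b 2) * h2

/-- Normal form `x²y` : if `disc3 (x²y/3 + t·g) = c t⁴` for all `t` then `disc3 g = 0`. -/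
lemma NF2 (b : Fin 4 → ℂ) (c : ℂ)
    (h : ∀ t : ℂ, disc3 (![0,(1/3 : ℂ),0,0] + t • b) = c * t ^ 4) : disc3 b = 0 := by
  have E : ∀ t : ℂ, (t * b 0) ^ 2 * (t * b 3) ^ 2
      - 6 * (t * b 0) * (1/3 + t * b 1) * (t * b 2) * (t * b 3)
      + 4 * (t * b 0) * (t * b 2) ^ 3 + 4 * (1/3 + t * b 1) ^ 3 * (t * b 3)
      - 3 * (1/3 + t * b 1) ^ 2 * (t * b 2) ^ 2 = c * t ^ 4 := by
    intro t
    have := h t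
    simpa [disc3] using this
  have h3 : b 3 = 0 := by
    linear_combination (9/2 : ℂ) * E 1 - (9/2 : ℂ) * E (-1) - (9/16 : ℂ) * E 2 + (9/16 : ℂ) * E (-2)
  have h2 : b 2 = 0 := by
    have h2sq : (b 2) ^ 2 = 0 := by
      linear_combination (-2 : ℂ) * E 1 - 2 * E (-1) + (1/8 : ℂ) * E 2 + (1/8 : ℂ) * E (-2)
        + 4 * b 1 * h3
    exact pow_eq_zero_iff (two_ne_zero) |>.mp h2sq
  simp only [disc3]
  linear_combination (b 0 ^2 * b 3 - 6 * b 0 * b 1 * b 2 + 4 * b 1 ^3) * h3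
    + (4 * b 0 * b 2 ^ 2 - 3 * b 1 ^2 * b 2) * h2

/-- There is no nonzero binary cubic `f` and binary cubic `g` with `disc g ≠ 0` such
that `disc (f + t g) = c t⁴` for a nonzero constant `c`: every line in `ℙ S³W*` not
contained in the discriminant quartic meets it in at least two distinct points. -/
theorem stmt14 :
    ¬ ∃ (f g : Fin 4 → ℂ) (c : ℂ), f ≠ 0 ∧ disc3 g ≠ 0 ∧ c ≠ 0 ∧
      ∀ t : ℂ, disc3 (f + t • g) = c * t ^ 4 := by
  rintro ⟨f, g, c, hf, hg, hc, h⟩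
  have hdf : disc3 f = 0 := by
    have := h 0
    simpa using this
  rcases factor3 f hf hdf with ⟨p, q, hpq, rfl⟩ | ⟨p, q, u, v, hΔ, rfl⟩
  · -- `f = (px+qy)³`
    obtain ⟨α, γ, hαγ⟩ : ∃ α γ : ℂ, p*α + q*γ = 1 := by
      rcases hpq with hp | hq
      · exact ⟨p⁻¹, 0, by field_simp; ring⟩
      · exact ⟨0, q⁻¹, by field_simp; ring⟩
    have hdet : α*p - (-q)*γ = 1 := by linear_combination hαγ
    set g' : Fin 4 → ℂ := act3 α (-q) γ p g with hg'
    have hcube : act3 α (-q) γ p (cube3 p q) = ![1,0,0,0] := by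
      rw [act3_cube3]
      have h1 : p*α + q*γ = 1 := hαγ
      have h2 : p*(-q) + q*p = 0 := by ring
      rw [h1, h2]
      funext i; fin_cases i <;> simp [cube3]
    have h' : ∀ t : ℂ, disc3 (![1,0,0,0] + t • g') = c * t ^ 4 := by
      intro t
      have step : disc3 (act3 α (-q) γ p (cube3 p q + t • g)) = c * t ^ 4 := by
        rw [disc3_act3, hdet]
        simpa using h t
      rwa [act3_add_smul, hcube] at step
    have hgz : disc3 g' = 0 := NF1 g' c h'
    rw [hg', disc3_act3, hdet] at hgz
    simp at hgz
    exact hg hgz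
  · -- `f = (px+qy)²(ux+vy)`
    obtain ⟨Δ, hΔdef⟩ : ∃ Δ : ℂ, Δ = p*v - q*u := ⟨_, rfl⟩
    have hΔ0 : Δ ≠ 0 := by rw [hΔdef]; exact hΔ
    have h5 : v*p - q*u = Δ := by rw [hΔdef]; ring
    have hdet : (v/Δ)*(p/Δ) - (-q/Δ)*(-u/Δ) = 1/Δ := by
      calc (v/Δ)*(p/Δ) - (-q/Δ)*(-u/Δ) = (v*p - q*u)/Δ^2 := by ring
        _ = Δ/Δ^2 := by rw [h5]
        _ = 1/Δ := by rw [sq, div_mul_eq_div_div, div_self hΔ0]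
    set g' : Fin 4 → ℂ := act3 (v/Δ) (-q/Δ) (-u/Δ) (p/Δ) g with hg'
    have hsq : act3 (v/Δ) (-q/Δ) (-u/Δ) (p/Δ) (sqlin3 p q u v) = ![0,(1/3 : ℂ),0,0] := by
      rw [act3_sqlin3]
      have h1 : p*(v/Δ) + q*(-u/Δ) = 1 := by
        field_simp
        rw [hΔdef]; ring
      have h2 : p*(-q/Δ) + q*(p/Δ) = 0 := by ring
      have h3 : u*(v/Δ) + v*(-u/Δ) = 0 := by ring
      have h4 : u*(-q/Δ) + v*(p/Δ) = 1 := by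
        field_simp
        rw [hΔdef]; ring
      rw [h1, h2, h3, h4]
      funext i; fin_cases i <;> norm_num [sqlin3]
    have h' : ∀ t : ℂ, disc3 (![0,(1/3 : ℂ),0,0] + t • g') = (c/Δ^6) * t ^ 4 := by
      intro t
      have step : disc3 (act3 (v/Δ) (-q/Δ) (-u/Δ) (p/Δ) (sqlin3 p q u v + t • g))
          = (c/Δ^6) * t ^ 4 := by
        rw [disc3_act3, hdet, h t]
        ring
      rwa [act3_add_smul, hsq] at step
    have hgz : disc3 g' = 0 := NF2 g' (c/Δ^6) h'
    rw [hg', disc3_act3, hdet] at hgz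
    rcases mul_eq_zero.mp hgz with h' | h'
    · exact absurd h' (pow_ne_zero 6 (one_div_ne_zero hΔ0))
    · exact hg h'
end

section
/- Let dim W = 2, d ≥ 3, and let t ∈ S^d W* with disc(t) ≠ 0. If T ∈ S^d W* satisfies disc(T − λ t) = disc(−t)·λ^{2d−2} (i.e. all t-eigenvalues of T are zero), then T = 0. -/
open MvPolynomial

noncomputable def binForm (d : ℕ) (c : Fin (d + 1) → ℂ) : MvPolynomial (Fin 2) ℂ :=
  ∑ k : Fin (d + 1), C (c k) * X 0 ^ (k : ℕ) * X 1 ^ (d - (k : ℕ))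

/-- univariate dehomogenization -/
noncomputable def uni (d : ℕ) (c : Fin (d + 1) → ℂ) : Polynomial ℂ :=
  ∑ k : Fin (d + 1), Polynomial.C (c k) * Polynomial.X ^ (k : ℕ)

/-- reversed coefficient vector -/
def revc (d : ℕ) (c : Fin (d + 1) → ℂ) : Fin (d + 1) → ℂ := fun k => c k.rev

lemma revc_apply (d : ℕ) (c : Fin (d+1) → ℂ) (k : Fin (d+1)) :
    revc d c k = c k.rev := rfl

lemma val_rev (d : ℕ) (k : Fin (d+1)) : (k.rev : ℕ) = d - (k : ℕ) := by
  simp [Fin.val_rev]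

lemma term_eq_monomial (a : ℂ) (k m : ℕ) :
    (C a * X 0 ^ k * X 1 ^ m : MvPolynomial (Fin 2) ℂ)
      = monomial (Finsupp.single 0 k + Finsupp.single 1 m) a := by
  rw [X_pow_eq_monomial, X_pow_eq_monomial, C_mul_monomial, monomial_mul]
  simp

lemma pderiv0_term (a : ℂ) (k m : ℕ) :
    pderiv 0 (C a * X 0 ^ k * X 1 ^ m : MvPolynomial (Fin 2) ℂ)
      = C (a * k) * X 0 ^ (k - 1) * X 1 ^ m := by
  have hs : ((Finsupp.single (0:Fin 2) k + Finsupp.single 1 m) - Finsupp.single 0 1)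
      = (Finsupp.single (0:Fin 2) (k-1) + Finsupp.single 1 m) := by
    ext j; fin_cases j <;> simp [Finsupp.single_apply, Finsupp.tsub_apply]
  have happ : ((Finsupp.single (0:Fin 2) k + Finsupp.single 1 m : Fin 2 →₀ ℕ)) 0 = k := by
    simp [Finsupp.single_apply]
  rw [term_eq_monomial, pderiv_monomial, hs, happ, term_eq_monomial]

lemma pderiv1_term (a : ℂ) (k m : ℕ) :
    pderiv 1 (C a * X 0 ^ k * X 1 ^ m : MvPolynomial (Fin 2) ℂ)
      = C (a * m) * X 0 ^ k * X 1 ^ (m - 1) := by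
  have hs : ((Finsupp.single (0:Fin 2) k + Finsupp.single 1 m) - Finsupp.single 1 1)
      = (Finsupp.single (0:Fin 2) k + Finsupp.single 1 (m-1)) := by
    ext j; fin_cases j <;> simp [Finsupp.single_apply, Finsupp.tsub_apply]
  have happ : ((Finsupp.single (0:Fin 2) k + Finsupp.single 1 m : Fin 2 →₀ ℕ)) 1 = m := by
    simp [Finsupp.single_apply]
  rw [term_eq_monomial, pderiv_monomial, hs, happ, term_eq_monomial]

lemma eval_pderiv0_binForm (d : ℕ) (c : Fin (d+1) → ℂ) (w : Fin 2 → ℂ) :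
    eval w (pderiv 0 (binForm d c))
      = ∑ k : Fin (d+1), c k * (k : ℕ) * w 0 ^ ((k : ℕ) - 1) * w 1 ^ (d - (k : ℕ)) := by
  rw [binForm, map_sum, map_sum]
  refine Finset.sum_congr rfl fun k _ => ?_
  rw [pderiv0_term]
  simp [mul_assoc]

lemma eval_pderiv1_binForm (d : ℕ) (c : Fin (d+1) → ℂ) (w : Fin 2 → ℂ) :
    eval w (pderiv 1 (binForm d c))
      = ∑ k : Fin (d+1), c k * ((d - (k : ℕ) : ℕ) : ℂ) * w 0 ^ (k : ℕ) * w 1 ^ (d - (k : ℕ) - 1) := by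
  rw [binForm, map_sum, map_sum]
  refine Finset.sum_congr rfl fun k _ => ?_
  rw [pderiv1_term]
  simp [mul_assoc]
open Polynomial in
lemma uni_eval (d : ℕ) (c : Fin (d+1) → ℂ) (z : ℂ) :
    (uni d c).eval z = ∑ k : Fin (d+1), c k * z ^ (k : ℕ) := by
  rw [uni]
  simp [eval_finset_sum]

open Polynomial in
lemma uni_deriv_eval (d : ℕ) (c : Fin (d+1) → ℂ) (z : ℂ) :
    (Polynomial.derivative (uni d c)).eval z
      = ∑ k : Fin (d+1), c k * (k : ℕ) * z ^ ((k : ℕ) - 1) := by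
  rw [uni, map_sum]
  rw [eval_finset_sum]
  refine Finset.sum_congr rfl fun k _ => ?_
  rw [derivative_C_mul_X_pow]
  simp [mul_assoc]

open Polynomial in
lemma uni_comb_eval (d : ℕ) (c : Fin (d+1) → ℂ) (z : ℂ) :
    (d : ℂ) * (uni d c).eval z - z * (Polynomial.derivative (uni d c)).eval z
      = ∑ k : Fin (d+1), c k * ((d - (k : ℕ) : ℕ) : ℂ) * z ^ (k : ℕ) := by
  rw [uni_eval, uni_deriv_eval, Finset.mul_sum, Finset.mul_sum, ← Finset.sum_sub_distrib]
  refine Finset.sum_congr rfl fun k _ => ?_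
  have hk : (k : ℕ) ≤ d := by omega
  rcases Nat.eq_zero_or_pos (k : ℕ) with h0 | h0
  · rw [h0]; push_cast [h0]; simp [Nat.sub_zero]; ring
  · have : z * (c k * ((k:ℕ):ℂ) * z ^ ((k:ℕ) - 1)) = c k * ((k:ℕ):ℂ) * z ^ (k:ℕ) := by
      rw [mul_comm z, mul_assoc, ← pow_succ]
      congr 2
      omega
    rw [this, Nat.cast_sub hk]
    ring

open Polynomial in
lemma uni_coeff (d : ℕ) (c : Fin (d+1) → ℂ) (k : Fin (d+1)) :
    (uni d c).coeff (k : ℕ) = c k := by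
  classical
  rw [uni, finset_sum_coeff]
  rw [Finset.sum_eq_single k]
  · simp
  · intro j _ hj
    have : (j : ℕ) ≠ (k : ℕ) := fun h => hj (Fin.ext h)
    simp [Polynomial.coeff_C_mul, Polynomial.coeff_X_pow, this.symm]
  · simp

open Polynomial in
lemma uni_natDegree_le (d : ℕ) (c : Fin (d+1) → ℂ) : (uni d c).natDegree ≤ d := by
  rw [uni]
  refine Polynomial.natDegree_sum_le_of_forall_le _ _ fun k _ => ?_
  refine le_trans (natDegree_C_mul_le _ _) ?_
  simp [natDegree_X_pow]
  omega

open Polynomial in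
lemma uni_eq_zero_iff (d : ℕ) (c : Fin (d+1) → ℂ) : uni d c = 0 ↔ c = 0 := by
  constructor
  · intro h
    funext k
    have := uni_coeff d c k
    rw [h] at this
    simpa using this.symm
  · intro h; rw [h, uni]; simp

open Polynomial in
lemma uni_revc_eq_reflect (d : ℕ) (c : Fin (d+1) → ℂ) :
    uni d (revc d c) = Polynomial.reflect d (uni d c) := by
  ext j
  rw [coeff_reflect]
  rcases le_or_gt j d with hj | hj
  · have hjlt : j < d + 1 := by omega
    have h1 : (uni d (revc d c)).coeff ((⟨j, hjlt⟩ : Fin (d+1)) : ℕ) = revc d c ⟨j, hjlt⟩ :=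
      uni_coeff d _ _
    rw [revAt_le hj]
    have hdjlt : d - j < d + 1 := by omega
    have h2 : (uni d c).coeff ((⟨d - j, hdjlt⟩ : Fin (d+1)) : ℕ) = c ⟨d - j, hdjlt⟩ :=
      uni_coeff d _ _
    simp only [Fin.val_mk] at h1 h2
    rw [h1, h2, revc_apply]
    congr 1
    ext
    rw [val_rev]
  · rw [revAt_eq_self_of_lt hj]
    rw [coeff_eq_zero_of_natDegree_lt (lt_of_le_of_lt (uni_natDegree_le d _) hj),
      coeff_eq_zero_of_natDegree_lt (lt_of_le_of_lt (uni_natDegree_le d _) hj)]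
lemma L1 (d : ℕ) (c : Fin (d+1) → ℂ) (z : ℂ) :
    eval ![z, 1] (pderiv 0 (binForm d c))
      = (Polynomial.derivative (uni d c)).eval z := by
  rw [eval_pderiv0_binForm, uni_deriv_eval]
  refine Finset.sum_congr rfl fun k _ => ?_
  simp

lemma L2 (d : ℕ) (c : Fin (d+1) → ℂ) (z : ℂ) :
    eval ![z, 1] (pderiv 1 (binForm d c))
      = (d : ℂ) * (uni d c).eval z - z * (Polynomial.derivative (uni d c)).eval z := by
  rw [eval_pderiv1_binForm, uni_comb_eval]
  refine Finset.sum_congr rfl fun k _ => ?_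
  simp

lemma L3 (d : ℕ) (c : Fin (d+1) → ℂ) (z : ℂ) :
    eval ![1, z] (pderiv 1 (binForm d c))
      = (Polynomial.derivative (uni d (revc d c))).eval z := by
  rw [eval_pderiv1_binForm, uni_deriv_eval]
  rw [← Equiv.sum_comp (Fin.revPerm : Equiv.Perm (Fin (d+1)))]
  refine Finset.sum_congr rfl fun k _ => ?_
  have hk : (k : ℕ) ≤ d := by omega
  have hrp : (Fin.revPerm k : Fin (d+1)) = k.rev := rfl
  rw [hrp, revc_apply, val_rev]
  have h2 : d - (d - (k:ℕ)) = (k:ℕ) := by omega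
  rw [h2]
  simp

lemma L4 (d : ℕ) (c : Fin (d+1) → ℂ) (z : ℂ) :
    eval ![1, z] (pderiv 0 (binForm d c))
      = (d : ℂ) * (uni d (revc d c)).eval z
        - z * (Polynomial.derivative (uni d (revc d c))).eval z := by
  rw [eval_pderiv0_binForm, uni_comb_eval]
  rw [← Equiv.sum_comp (Fin.revPerm : Equiv.Perm (Fin (d+1)))]
  refine Finset.sum_congr rfl fun k _ => ?_
  have hk : (k : ℕ) ≤ d := by omega
  have hrp : (Fin.revPerm k : Fin (d+1)) = k.rev := rfl
  rw [hrp, revc_apply, val_rev]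
  have h2 : d - (d - (k:ℕ)) = (k:ℕ) := by omega
  rw [h2]
  simp

lemma binForm_sub_smul (d : ℕ) (T t : Fin (d+1) → ℂ) (lam : ℂ) :
    binForm d (T - lam • t) = binForm d T - C lam * binForm d t := by
  rw [binForm, binForm, binForm, Finset.mul_sum, ← Finset.sum_sub_distrib]
  refine Finset.sum_congr rfl fun k _ => ?_
  have : (T - lam • t) k = T k - lam * t k := rfl
  rw [this, map_sub, map_mul]
  ring

lemma binForm_neg (d : ℕ) (t : Fin (d+1) → ℂ) :
    binForm d (-t) = - binForm d t := by
  have h : (-t) = (0 : Fin (d+1) → ℂ) - (1 : ℂ) • t := by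
    funext k; simp
  rw [h, binForm_sub_smul]
  have h0 : binForm d (0 : Fin (d+1) → ℂ) = 0 := by
    rw [binForm]; simp
  rw [h0]
  simp
open Polynomial in
lemma comb_natDegree_le (dd : ℕ) (P : Polynomial ℂ) (hP : P.natDegree ≤ dd) :
    (Polynomial.C (dd:ℂ) * P - Polynomial.X * Polynomial.derivative P).natDegree ≤ dd - 1 := by
  rw [natDegree_le_iff_coeff_eq_zero]
  intro N hN
  have hN1 : 1 ≤ N := by omega
  obtain ⟨M, rfl⟩ : ∃ M, N = M + 1 := ⟨N - 1, by omega⟩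
  rw [Polynomial.coeff_sub, Polynomial.coeff_C_mul, Polynomial.coeff_X_mul, coeff_derivative]
  rcases lt_or_ge dd (M+1) with h | h
  · rw [coeff_eq_zero_of_natDegree_lt (lt_of_le_of_lt hP h)]
    ring
  · have hdd : dd = M + 1 := by omega
    rw [hdd]
    push_cast
    ring

open Polynomial in
lemma derivative_reflect (dd : ℕ) (P : Polynomial ℂ) (hP : P.natDegree ≤ dd) :
    Polynomial.derivative (Polynomial.reflect dd P)
      = Polynomial.reflect (dd - 1)
          (Polynomial.C (dd:ℂ) * P - Polynomial.X * Polynomial.derivative P) := by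
  ext j
  rw [coeff_derivative, coeff_reflect, coeff_reflect]
  rcases lt_or_ge j dd with hj | hj
  · rw [revAt_le (by omega : j + 1 ≤ dd), revAt_le (by omega : j ≤ dd - 1)]
    have hde : dd - 1 - j = dd - (j+1) := by omega
    rw [hde]
    rw [Polynomial.coeff_sub, Polynomial.coeff_C_mul]
    rcases Nat.eq_zero_or_pos (dd - (j+1)) with h0 | h0
    · rw [h0, coeff_X_mul_zero]
      have hdd : dd = j + 1 := by omega
      rw [hdd]
      push_cast
      ring
    · obtain ⟨i', hi'⟩ : ∃ i', dd - (j+1) = i' + 1 := ⟨dd - (j+1) - 1, by omega⟩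
      rw [hi', Polynomial.coeff_X_mul, coeff_derivative]
      have hdd : dd = j + 1 + (i' + 1) := by omega
      rw [hdd]
      push_cast
      ring
  · rw [revAt_eq_self_of_lt (by omega : dd < j + 1)]
    rw [coeff_eq_zero_of_natDegree_lt (by omega : P.natDegree < j + 1), zero_mul]
    rcases lt_or_ge (dd - 1) j with hj2 | hj2
    · rw [revAt_eq_self_of_lt hj2]
      exact (coeff_eq_zero_of_natDegree_lt
        (lt_of_le_of_lt (comb_natDegree_le dd P hP) hj2)).symm
    · have hdd0 : dd = 0 ∧ j = 0 := by omega
      obtain ⟨h1, h2⟩ := hdd0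
      subst h1; subst h2
      simp
open Polynomial in
lemma local_ord {F G : Polynomial ℂ} (hF : F ≠ 0)
    (hW : Polynomial.derivative F * G - F * Polynomial.derivative G ≠ 0) {a : ℂ}
    (hFa : F.eval a = 0) (hF'a : (Polynomial.derivative F).eval a = 0)
    (hG : G.eval a = 0 → (Polynomial.derivative G).eval a ≠ 0) :
    rootMultiplicity a (Polynomial.derivative F * G - F * Polynomial.derivative G)
      ≤ rootMultiplicity a F := by
  set W := Polynomial.derivative F * G - F * Polynomial.derivative G with hWdef
  -- m ≥ 2
  have hdvd2 : (Polynomial.X - Polynomial.C a) ^ 2 ∣ F := by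
    obtain ⟨F₁, hF₁⟩ := Polynomial.dvd_iff_isRoot.mpr hFa
    have h1 : (Polynomial.derivative F).eval a = F₁.eval a := by
      rw [hF₁, derivative_mul]
      simp
    have h2 : F₁.eval a = 0 := by rw [← h1]; exact hF'a
    obtain ⟨F₂, hF₂⟩ := Polynomial.dvd_iff_isRoot.mpr h2
    refine ⟨F₂, ?_⟩
    rw [hF₁, hF₂]
    ring
  have hm2 : 2 ≤ rootMultiplicity a F := (Polynomial.le_rootMultiplicity_iff hF).mpr hdvd2
  obtain ⟨n, hn1, hmn⟩ : ∃ n, 1 ≤ n ∧ rootMultiplicity a F = n + 1 :=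
    ⟨rootMultiplicity a F - 1, by omega, by omega⟩
  set H := F /ₘ (Polynomial.X - Polynomial.C a) ^ rootMultiplicity a F with hH
  have hFH : (Polynomial.X - Polynomial.C a) ^ rootMultiplicity a F * H = F :=
    Polynomial.pow_mul_divByMonic_rootMultiplicity_eq F a
  have hHa : H.eval a ≠ 0 := Polynomial.eval_divByMonic_pow_rootMultiplicity_ne_zero a hF
  have hdF : Polynomial.derivative F
      = (Polynomial.X - Polynomial.C a) ^ n
        * (Polynomial.C ((n:ℂ)+1) * H
            + (Polynomial.X - Polynomial.C a) * Polynomial.derivative H) := by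
    conv_lhs => rw [← hFH, hmn]
    rw [derivative_mul, derivative_pow]
    simp only [derivative_sub, derivative_X, derivative_C, sub_zero, mul_one]
    push_cast
    ring
  by_cases hGa : G.eval a = 0
  · -- G = (X - a) * U
    obtain ⟨U, hU⟩ := Polynomial.dvd_iff_isRoot.mpr hGa
    have hdG : Polynomial.derivative G
        = U + (Polynomial.X - Polynomial.C a) * Polynomial.derivative U := by
      rw [hU, derivative_mul]
      simp only [derivative_sub, derivative_X, derivative_C, sub_zero, one_mul]
    have hUa : U.eval a ≠ 0 := by
      have := hG hGa
      rw [hdG] at this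
      simpa using this
    set K := (Polynomial.C ((n:ℂ)+1) * H
        + (Polynomial.X - Polynomial.C a) * Polynomial.derivative H) * U
      - H * (U + (Polynomial.X - Polynomial.C a) * Polynomial.derivative U) with hK
    have hWfac : W = (Polynomial.X - Polynomial.C a) ^ (n+1) * K := by
      rw [hWdef, hdF, hdG, hU]
      conv_lhs => rw [← hFH, hmn]
      rw [hK]
      ring
    have hn0 : (n:ℂ) ≠ 0 := Nat.cast_ne_zero.mpr (by omega)
    have hval : K.eval a = (n:ℂ) * (H.eval a * U.eval a) := by
      rw [hK]
      simp only [Polynomial.eval_sub, Polynomial.eval_mul, Polynomial.eval_add,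
        Polynomial.eval_C, Polynomial.eval_X, sub_self, zero_mul, mul_zero, add_zero]
      ring
    have hKa : K.eval a ≠ 0 := by
      rw [hval]
      exact mul_ne_zero hn0 (mul_ne_zero hHa hUa)
    rw [hWfac, hmn, Polynomial.rootMultiplicity_mul (by rw [← hWfac]; exact hW)]
    rw [Polynomial.rootMultiplicity_X_sub_C_pow,
      Polynomial.rootMultiplicity_eq_zero (fun hcon => hKa hcon)]
  · set K := (Polynomial.C ((n:ℂ)+1) * H
        + (Polynomial.X - Polynomial.C a) * Polynomial.derivative H) * G
      - (Polynomial.X - Polynomial.C a) * (H * Polynomial.derivative G) with hK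
    have hWfac : W = (Polynomial.X - Polynomial.C a) ^ n * K := by
      rw [hWdef, hdF]
      conv_lhs => rw [← hFH, hmn]
      rw [hK]
      ring
    have hn0 : ((n:ℂ)+1) ≠ 0 := by
      have h' : (((n+1 : ℕ)) : ℂ) ≠ 0 := Nat.cast_ne_zero.mpr (Nat.succ_ne_zero n)
      push_cast at h'
      exact h'
    have hval : K.eval a = ((n:ℂ)+1) * (H.eval a * G.eval a) := by
      rw [hK]
      simp only [Polynomial.eval_sub, Polynomial.eval_mul, Polynomial.eval_add,
        Polynomial.eval_C, Polynomial.eval_X, sub_self, zero_mul, mul_zero, add_zero]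
      ring
    have hKa : K.eval a ≠ 0 := by
      rw [hval]
      exact mul_ne_zero hn0 (mul_ne_zero hHa hGa)
    rw [hWfac, Polynomial.rootMultiplicity_mul (by rw [← hWfac]; exact hW)]
    rw [Polynomial.rootMultiplicity_X_sub_C_pow,
      Polynomial.rootMultiplicity_eq_zero (fun hcon => hKa hcon)]
    omega
open Polynomial in
lemma reflect_eq_zero' {N : ℕ} {p : Polynomial ℂ} (h : Polynomial.reflect N p = 0) : p = 0 := by
  ext j
  have h2 := congrArg (fun q : Polynomial ℂ => q.coeff (revAt N j)) h
  simpa [coeff_reflect, revAt_invol] using h2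

/-- For binary forms of degree `d ≥ 3`: if `disc t ≠ 0` and all `t`-eigenvalues of
`T` are zero, i.e. `disc (T - λ t) = disc (-t) · λ^{2d-2}` for all `λ`, then `T = 0`.
Forms are recorded by their coefficient vectors; `Disc` is homogeneous of degree
`2d - 2` and vanishes exactly on forms with a repeated (singular) root. -/
theorem stmt16 (d : ℕ) (hd : 3 ≤ d)
    (Disc : MvPolynomial (Fin (d + 1)) ℂ)
    (hhom : Disc.IsHomogeneous (2 * d - 2))
    (hvan : ∀ c : Fin (d + 1) → ℂ,
      (eval c Disc = 0 ↔
        ∃ w : Fin 2 → ℂ, w ≠ 0 ∧ ∀ i, eval w (pderiv i (binForm d c)) = 0))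
    (t T : Fin (d + 1) → ℂ) (ht : eval t Disc ≠ 0)
    (hT : ∀ lam : ℂ, eval (T - lam • t) Disc = eval (-t) Disc * lam ^ (2 * d - 2)) :
    T = 0 := by
  classical
  have hd2 : (2*d - 2) ≠ 0 := by omega
  have hdC : (d:ℂ) ≠ 0 := Nat.cast_ne_zero.mpr (by omega)
  have hgrad_t : ∀ w : Fin 2 → ℂ, w ≠ 0 →
      ¬ (∀ i, eval w (pderiv i (binForm d t)) = 0) := fun w hw hcon =>
    ht ((hvan t).mpr ⟨w, hw, hcon⟩)
  have hCne : eval (-t) Disc ≠ 0 := by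
    intro h
    obtain ⟨w, hw, hcon⟩ := (hvan (-t)).mp h
    refine hgrad_t w hw fun i => ?_
    have h1 := hcon i
    rw [binForm_neg, map_neg, map_neg, neg_eq_zero] at h1
    exact h1
  -- Step 1 (eigenvalue argument)
  have step1 : ∀ w : Fin 2 → ℂ, w ≠ 0 →
      eval w (pderiv 0 (binForm d T)) * eval w (pderiv 1 (binForm d t))
        - eval w (pderiv 1 (binForm d T)) * eval w (pderiv 0 (binForm d t)) = 0 →
      (∀ i, eval w (pderiv i (binForm d T)) = 0) := by
    intro w hw hdet
    set a0 := eval w (pderiv 0 (binForm d T)) with ha0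
    set a1 := eval w (pderiv 1 (binForm d T)) with ha1
    set b0 := eval w (pderiv 0 (binForm d t)) with hb0'
    set b1 := eval w (pderiv 1 (binForm d t)) with hb1'
    have hex : ∃ lam : ℂ, a0 = lam * b0 ∧ a1 = lam * b1 := by
      by_cases hb0 : b0 = 0
      · have hb1 : b1 ≠ 0 := by
          intro hb1
          refine hgrad_t w hw fun i => ?_
          fin_cases i
          · exact hb0
          · exact hb1
        refine ⟨a1 / b1, ?_, by field_simp⟩
        rw [hb0] at hdet ⊢
        rw [mul_zero] at hdet ⊢
        have : a0 * b1 = 0 := by linear_combination hdet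
        exact (mul_eq_zero.mp this).resolve_right hb1
      · refine ⟨a0 / b0, by field_simp, ?_⟩
        field_simp
        linear_combination -hdet
    obtain ⟨lam, h0, h1⟩ := hex
    have hsing : eval (T - lam • t) Disc = 0 := by
      refine (hvan _).mpr ⟨w, hw, fun i => ?_⟩
      rw [binForm_sub_smul, map_sub, pderiv_C_mul, map_sub, eval_mul, eval_C]
      fin_cases i
      · show a0 - lam * b0 = 0
        rw [h0]; ring
      · show a1 - lam * b1 = 0
        rw [h1]; ring
    have hTlam := hT lam
    rw [hsing] at hTlam
    have hlam : lam = 0 := by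
      rcases mul_eq_zero.mp hTlam.symm with h | h
      · exact absurd h hCne
      · exact pow_eq_zero_iff hd2 |>.mp h
    intro i
    fin_cases i
    · show a0 = 0
      rw [h0, hlam, zero_mul]
    · show a1 = 0
      rw [h1, hlam, zero_mul]
  -- univariate setup
  set F := uni d T with hFdef
  set Gp := uni d t with hGdef
  set W := Polynomial.derivative F * Gp - F * Polynomial.derivative Gp with hWdef
  have hne1 : ∀ z : ℂ, (![z,1] : Fin 2 → ℂ) ≠ 0 := by
    intro z h
    have := congrFun h 1
    simp at this
  have hne2 : ∀ z : ℂ, (![1,z] : Fin 2 → ℂ) ≠ 0 := by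
    intro z h
    have := congrFun h 0
    simp at this
  have hGcond : ∀ z : ℂ, Gp.eval z = 0 → (Polynomial.derivative Gp).eval z ≠ 0 := by
    intro z h0 h1
    refine hgrad_t ![z,1] (hne1 z) fun i => ?_
    fin_cases i
    · show eval ![z,1] (pderiv 0 (binForm d t)) = 0
      rw [L1, ← hGdef, h1]
    · show eval ![z,1] (pderiv 1 (binForm d t)) = 0
      rw [L2, ← hGdef, h0, h1]; ring
  have haffine : ∀ z : ℂ, W.eval z = 0 →
      F.eval z = 0 ∧ (Polynomial.derivative F).eval z = 0 := by
    intro z hz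
    rw [hWdef] at hz
    simp only [Polynomial.eval_sub, Polynomial.eval_mul] at hz
    have hdet : eval ![z,1] (pderiv 0 (binForm d T)) * eval ![z,1] (pderiv 1 (binForm d t))
        - eval ![z,1] (pderiv 1 (binForm d T)) * eval ![z,1] (pderiv 0 (binForm d t)) = 0 := by
      rw [L1, L2, L1, L2, ← hFdef, ← hGdef]
      linear_combination (d:ℂ) * hz
    have hall := step1 ![z,1] (hne1 z) hdet
    have h0 := hall 0
    have h1 := hall 1
    rw [L1, ← hFdef] at h0
    rw [L2, ← hFdef] at h1
    refine ⟨?_, h0⟩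
    have hdF : (d:ℂ) * F.eval z = 0 := by linear_combination h1 + z * h0
    exact (mul_eq_zero.mp hdF).resolve_left hdC
  -- reduce to F = 0
  suffices hF0 : F = 0 by
    funext k
    have hc := uni_coeff d T k
    rw [← hFdef, hF0] at hc
    simpa using hc.symm
  by_contra hFne
  by_cases hWz : W = 0
  · refine hFne (Polynomial.funext fun z => ?_)
    rw [(haffine z (by rw [hWz]; simp)).1]
    simp
  -- main inequality chain
  have hrootsle : W.roots ≤ F.roots := by
    rw [Multiset.le_iff_count]
    intro a
    rw [Polynomial.count_roots, Polynomial.count_roots]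
    by_cases ha : W.eval a = 0
    · exact local_ord hFne (hWdef ▸ hWz) (haffine a ha).1 (haffine a ha).2 (hGcond a)
    · rw [Polynomial.rootMultiplicity_eq_zero ha]
      exact Nat.zero_le _
  have hNW : W.natDegree ≤ F.natDegree := by
    have h1 := (IsAlgClosed.card_roots_eq_natDegree (p := W)).symm
    calc W.natDegree = Multiset.card W.roots := h1
      _ ≤ Multiset.card F.roots := Multiset.card_le_card hrootsle
      _ ≤ F.natDegree := Polynomial.card_roots' F
  have hFdeg : F.natDegree ≤ d := uni_natDegree_le d T
  have hGdeg : Gp.natDegree ≤ d := uni_natDegree_le d t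
  -- reversed polynomials
  set Ft := uni d (revc d T) with hFtdef
  set Gt := uni d (revc d t) with hGtdef
  set Wt := Polynomial.derivative Ft * Gt - Ft * Polynomial.derivative Gt with hWtdef
  have hFrefl : Ft = Polynomial.reflect d F := by rw [hFtdef, hFdef]; exact uni_revc_eq_reflect d T
  have hGrefl : Gt = Polynomial.reflect d Gp := by rw [hGtdef, hGdef]; exact uni_revc_eq_reflect d t
  have hQFdeg := comb_natDegree_le d F hFdeg
  have hQGdeg := comb_natDegree_le d Gp hGdeg
  have hXW : Polynomial.X * W
      = (Polynomial.C (d:ℂ) * Gp - Polynomial.X * Polynomial.derivative Gp) * F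
        - (Polynomial.C (d:ℂ) * F - Polynomial.X * Polynomial.derivative F) * Gp := by
    rw [hWdef]; ring
  have hWdeg : W.natDegree ≤ 2*d-2 := by
    have h1 : (Polynomial.X * W).natDegree = 1 + W.natDegree := by
      rw [Polynomial.natDegree_mul Polynomial.X_ne_zero hWz, Polynomial.natDegree_X]
    have h2 : (Polynomial.X * W).natDegree ≤ 2*d-1 := by
      rw [hXW]
      refine le_trans (Polynomial.natDegree_sub_le _ _) (max_le ?_ ?_)
      · exact le_trans Polynomial.natDegree_mul_le (by omega)
      · exact le_trans Polynomial.natDegree_mul_le (by omega)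
    omega
  have hWt_refl : Wt = - Polynomial.reflect (2*d-2) W := by
    rw [hWtdef, hFrefl, hGrefl, derivative_reflect d F hFdeg, derivative_reflect d Gp hGdeg]
    rw [← Polynomial.reflect_mul _ _ hQFdeg hGdeg, ← Polynomial.reflect_mul _ _ hFdeg hQGdeg]
    have hidx : (d - 1) + d = d + (d - 1) := by omega
    rw [hidx, ← Polynomial.reflect_sub]
    have hkey : (Polynomial.C (d:ℂ) * F - Polynomial.X * Polynomial.derivative F) * Gp
        - F * (Polynomial.C (d:ℂ) * Gp - Polynomial.X * Polynomial.derivative Gp)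
        = -(Polynomial.X * W) := by
      rw [hWdef]; ring
    rw [hkey, Polynomial.reflect_neg]
    have hidx2 : d + (d - 1) = 1 + (2*d-2) := by omega
    rw [hidx2, Polynomial.reflect_mul _ _ Polynomial.natDegree_X_le hWdeg]
    have hX : Polynomial.reflect 1 (Polynomial.X : Polynomial ℂ) = 1 := by
      have := Polynomial.reflect_monomial 1 1 (R := ℂ)
      rw [pow_one] at this
      rw [this, Polynomial.revAt_le (le_refl 1)]
      norm_num
    rw [hX, one_mul]
  set N := W.natDegree with hN
  have hcoefftop : Wt.coeff (2*d-2 - N) ≠ 0 := by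
    rw [hWt_refl, Polynomial.coeff_neg, Polynomial.coeff_reflect,
      Polynomial.revAt_le (by omega : 2*d-2-N ≤ 2*d-2)]
    have he : 2*d-2 - (2*d-2 - N) = N := by omega
    rw [he]
    exact neg_ne_zero.mpr (Polynomial.leadingCoeff_ne_zero.mpr hWz)
  have hWtne : Wt ≠ 0 := fun h => hcoefftop (by rw [h]; simp)
  have hlowcoeff : ∀ j, j < 2*d-2 - N → Wt.coeff j = 0 := by
    intro j hj
    rw [hWt_refl, Polynomial.coeff_neg, Polynomial.coeff_reflect,
      Polynomial.revAt_le (by omega : j ≤ 2*d-2)]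
    rw [Polynomial.coeff_eq_zero_of_natDegree_lt (by omega : W.natDegree < 2*d-2-j)]
    simp
  have hMlow : 2*d-2-N ≤ Polynomial.rootMultiplicity 0 Wt := by
    rw [Polynomial.le_rootMultiplicity_iff hWtne]
    have hX0 : (Polynomial.X - Polynomial.C (0:ℂ)) = Polynomial.X := by simp
    rw [hX0, Polynomial.X_pow_dvd_iff]
    exact hlowcoeff
  -- infinity chart conditions
  have hGcondInf : Gt.eval 0 = 0 → (Polynomial.derivative Gt).eval 0 ≠ 0 := by
    intro h0 h1
    refine hgrad_t ![1,0] (hne2 0) fun i => ?_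
    fin_cases i
    · show eval ![1,(0:ℂ)] (pderiv 0 (binForm d t)) = 0
      rw [L4, ← hGtdef, h0, h1]; ring
    · show eval ![1,(0:ℂ)] (pderiv 1 (binForm d t)) = 0
      rw [L3, ← hGtdef, h1]
  have haffineInf : Wt.eval 0 = 0 →
      Ft.eval 0 = 0 ∧ (Polynomial.derivative Ft).eval 0 = 0 := by
    intro hz
    rw [hWtdef] at hz
    simp only [Polynomial.eval_sub, Polynomial.eval_mul] at hz
    have hdet : eval ![1,0] (pderiv 0 (binForm d T)) * eval ![1,0] (pderiv 1 (binForm d t))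
        - eval ![1,0] (pderiv 1 (binForm d T)) * eval ![1,0] (pderiv 0 (binForm d t)) = 0 := by
      rw [L4, L3, L3, L4, ← hFtdef, ← hGtdef]
      linear_combination (-(d:ℂ)) * hz
    have hall := step1 ![1,0] (hne2 0) hdet
    have h0 := hall 0
    have h1 := hall 1
    rw [L4, ← hFtdef] at h0
    rw [L3, ← hFtdef] at h1
    refine ⟨?_, h1⟩
    have hdF : (d:ℂ) * Ft.eval 0 = 0 := by linear_combination h0
    exact (mul_eq_zero.mp hdF).resolve_left hdC
  have hFtne : Ft ≠ 0 := by
    rw [hFrefl]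
    intro h
    exact hFne (reflect_eq_zero' h)
  rcases Nat.eq_zero_or_pos (2*d-2-N) with hM0 | hMpos
  · omega
  · have hWt0 : Wt.eval 0 = 0 := by
      have hpos : 0 < Polynomial.rootMultiplicity 0 Wt := lt_of_lt_of_le hMpos hMlow
      exact (Polynomial.rootMultiplicity_pos hWtne).mp hpos
    obtain ⟨hFt0, hFt'0⟩ := haffineInf hWt0
    have hordle : Polynomial.rootMultiplicity 0 Wt ≤ Polynomial.rootMultiplicity 0 Ft :=
      local_ord hFtne (hWtdef ▸ hWtne) hFt0 hFt'0 hGcondInf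
    have hFtord : Polynomial.rootMultiplicity 0 Ft ≤ d - F.natDegree := by
      by_contra hcon
      push_neg at hcon
      have hdvd : (Polynomial.X : Polynomial ℂ) ^ Polynomial.rootMultiplicity 0 Ft ∣ Ft := by
        have h2 := Polynomial.pow_rootMultiplicity_dvd Ft 0
        simpa using h2
      have hc0 := Polynomial.X_pow_dvd_iff.mp hdvd (d - F.natDegree) hcon
      rw [hFrefl, Polynomial.coeff_reflect,
        Polynomial.revAt_le (by omega : d - F.natDegree ≤ d)] at hc0
      have he : d - (d - F.natDegree) = F.natDegree := by omega
      rw [he] at hc0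
      exact Polynomial.leadingCoeff_ne_zero.mpr hFne hc0
    omega
end
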